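/- arXiv:1501.06284 — 5 statements merged into one kernel-verified Lean document; each statement's English description precedes it below -/
import Mathlib

section
/- Fix d ∈ ℤ and let X_d = { x ∈ ℕ : 2x ≥ d }. The function k : X_d × X_d → ℝ defined by k(x, x') = (x + x' − d)! is a positive semidefinite kernel on X_d. -/
def IsPSDKernel {X : Type*} (k : X → X → ℝ) : Prop :=
  ∀ (n : ℕ) (x : Fin n → X) (c : Fin n → ℝ),
    0 ≤ ∑ i : Fin n, ∑ j : Fin n, c i * c j * k (x i) (x j)

/-!
`(x + x' - d)! = Γ(s + s')` with `s = x - d/2 + 1/2 > 0`, and `Γ(s + s')` is the Gram kernel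
`∫ φ_s φ_{s'}` of the functions `φ_s(t) = t^(s - 1/2) e^(-t/2)` on `(0, ∞)`.
-/

open MeasureTheory Set Finset

theorem IsPSDKernel.comp {X Y : Type*} {k : X → X → ℝ} (hk : IsPSDKernel k) (f : Y → X) :
    IsPSDKernel (fun y y' => k (f y) (f y')) :=
  fun n y c => hk n (f ∘ y) c

theorem isPSDKernel_integral_mul {X α : Type*} [MeasurableSpace α] (μ : Measure α)
    (φ : X → α → ℝ) (hφ : ∀ x x', Integrable (fun a => φ x a * φ x' a) μ) :
    IsPSDKernel (fun x x' => ∫ a, φ x a * φ x' a ∂μ) := by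
  intro n x c
  have hint : ∀ i j, Integrable (fun a => c i * φ (x i) a * (c j * φ (x j) a)) μ := fun i j => by
    simpa only [mul_mul_mul_comm] using (hφ (x i) (x j)).const_mul (c i * c j)
  calc (0 : ℝ) ≤ ∫ a, (∑ i, c i * φ (x i) a) ^ 2 ∂μ := integral_nonneg fun a => sq_nonneg _
    _ = ∫ a, ∑ i, ∑ j, c i * φ (x i) a * (c j * φ (x j) a) ∂μ := by
      simp only [sq, sum_mul_sum]
    _ = ∑ i, ∑ j, c i * c j * ∫ a, φ (x i) a * φ (x j) a ∂μ := by
      rw [integral_finsetSum _ fun i _ => integrable_finsetSum _ fun j _ => hint i j]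
      refine sum_congr rfl fun i _ => ?_
      rw [integral_finsetSum _ fun j _ => hint i j]
      refine sum_congr rfl fun j _ => ?_
      rw [← integral_const_mul]
      simp only [mul_mul_mul_comm]

theorem isPSDKernel_gamma_add :
    IsPSDKernel (fun s s' : Ioi (0 : ℝ) => Real.Gamma (s + s')) := by
  let φ : Ioi (0 : ℝ) → ℝ → ℝ := fun s t => t ^ ((s : ℝ) - 1 / 2) * Real.exp (-t / 2)
  have hφ : ∀ s s' : Ioi (0 : ℝ), EqOn (fun t => φ s t * φ s' t)
      (fun t => Real.exp (-t) * t ^ ((s + s' : ℝ) - 1)) (Ioi 0) :=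
    fun s s' t (ht : 0 < t) => by
      simp only [φ]
      rw [mul_mul_mul_comm, ← Real.rpow_add ht, ← Real.exp_add]
      ring_nf
  have hpos : ∀ s s' : Ioi (0 : ℝ), 0 < (s + s' : ℝ) := fun s s' => add_pos s.2 s'.2
  convert isPSDKernel_integral_mul (volume.restrict (Ioi 0)) φ fun s s' =>
    (Real.GammaIntegral_convergent (hpos s s')).congr_fun (hφ s s').symm measurableSet_Ioi
    using 3 with s s'
  rw [Real.Gamma_eq_integral (hpos s s'), setIntegral_congr_fun measurableSet_Ioi (hφ s s')]

/-- Lemma 2: the factorial kernel `k(x, x') = (x + x' − d)!` on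
`X_d = {x ∈ ℕ : 2x ≥ d}` is positive semidefinite. -/
theorem factorial_kernel_is_psd (d : ℤ) :
    IsPSDKernel (fun (x x' : {x : ℕ // d ≤ 2 * (x : ℤ)}) =>
      (Nat.factorial ((x : ℤ) + (x' : ℤ) - d).toNat : ℝ)) := by
  let shift : {x : ℕ // d ≤ 2 * (x : ℤ)} → Ioi (0 : ℝ) := fun x =>
    ⟨(x : ℝ) - d / 2 + 1 / 2, by
      have : (d : ℝ) ≤ 2 * (x : ℕ) := by exact_mod_cast x.2
      rw [Set.mem_Ioi]; linarith⟩
  convert isPSDKernel_gamma_add.comp shift using 3 with x x'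
  have hnonneg : 0 ≤ (x : ℤ) + (x' : ℤ) - d := by have := x.2; have := x'.2; omega
  have hcast : (((x : ℤ) + (x' : ℤ) - d).toNat : ℝ) = (x : ℝ) + x' - d := by
    rw [← Int.cast_natCast, Int.toNat_of_nonneg hnonneg]; push_cast; rfl
  rw [← Real.Gamma_nat_eq_factorial, hcast]
  congr 1
  simp only [shift]
  ring
end

section
/- For fixed d ∈ ℕ, the function k_d(i,j) = C_hv^{i+j−2−2d} · C_d^d · (i+j−2−d)! / ((i−1−d)! (j−1−d)!) defined for integers i, j > d is a positive semidefinite kernel on { n ∈ ℕ : n > d }, for any C_hv ∈ ℝ and C_d ≥ 0. -/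
open MeasureTheory Set

namespace IsPSDKernel

variable {X Y : Type*} {k : Y → Y → ℝ}

theorem comp_s8 (hk : IsPSDKernel k) (f : X → Y) : IsPSDKernel (fun x y => k (f x) (f y)) :=
  fun n x c => hk n (f ∘ x) c

theorem mul_apply_mul_apply (hk : IsPSDKernel k) (g : Y → ℝ) :
    IsPSDKernel (fun x y => g x * g y * k x y) := by
  intro n x c
  convert hk n x (fun i => c i * g (x i)) using 3 with i _ j _
  ring

theorem const_mul (hk : IsPSDKernel k) {r : ℝ} (hr : 0 ≤ r) :
    IsPSDKernel (fun x y => r * k x y) := by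
  intro n x c
  calc (0 : ℝ) ≤ r * ∑ i, ∑ j, c i * c j * k (x i) (x j) := mul_nonneg hr (hk n x c)
    _ = _ := by simp only [Finset.mul_sum]; ring_nf

end IsPSDKernel

theorem isPSDKernel_integral_mul_mul {X α : Type*} [MeasurableSpace α] {μ : Measure α}
    {f : X → α → ℝ} {w : α → ℝ} (hw : 0 ≤ᵐ[μ] w)
    (hf : ∀ x y, Integrable (fun t => f x t * f y t * w t) μ) :
    IsPSDKernel (fun x y => ∫ t, f x t * f y t * w t ∂μ) := by
  intro n x c
  have hsum : ∑ i, ∑ j, c i * c j * ∫ t, f (x i) t * f (x j) t * w t ∂μ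
      = ∫ t, (∑ i, c i * f (x i) t) ^ 2 * w t ∂μ := by
    have hterm (i j : Fin n) :
        Integrable (fun t => c i * c j * (f (x i) t * f (x j) t * w t)) μ :=
      (hf (x i) (x j)).const_mul _
    simp_rw [← integral_const_mul, ← integral_finsetSum _ fun j _ => hterm _ j]
    rw [← integral_finsetSum _ fun i _ => integrable_finsetSum _ fun j _ => hterm i j]
    congr 1 with t
    rw [sq, Finset.sum_mul_sum, Finset.sum_mul]
    exact Finset.sum_congr rfl fun i _ => by
      rw [Finset.sum_mul]; exact Finset.sum_congr rfl fun j _ => by ring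
  rw [hsum]
  exact integral_nonneg_of_ae (hw.mono fun t ht => mul_nonneg (sq_nonneg _) ht)

theorem integrableOn_exp_neg_mul_pow (m : ℕ) :
    IntegrableOn (fun t : ℝ => Real.exp (-t) * t ^ m) (Ioi 0) := by
  refine (Real.GammaIntegral_convergent (s := m + 1) (by positivity)).congr_fun
    (fun t _ => ?_) measurableSet_Ioi
  simp only [add_sub_cancel_right, Real.rpow_natCast]

theorem integral_exp_neg_mul_pow (m : ℕ) :
    ∫ t in Ioi (0 : ℝ), Real.exp (-t) * t ^ m = m.factorial := by
  rw [← Real.Gamma_nat_eq_factorial, Real.Gamma_eq_integral (by positivity)]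
  refine setIntegral_congr_fun measurableSet_Ioi fun t _ => ?_
  rw [add_sub_cancel_right, Real.rpow_natCast]

theorem isPSDKernel_factorial_add_div (d : ℕ) :
    IsPSDKernel (fun a b : ℕ => ((a + b + d).factorial : ℝ) / (a.factorial * b.factorial)) := by
  have hmoment (a b : ℕ) (t : ℝ) :
      t ^ a / a.factorial * (t ^ b / b.factorial) * (Real.exp (-t) * t ^ d)
        = (a.factorial * b.factorial : ℝ)⁻¹ * (Real.exp (-t) * t ^ (a + b + d)) := by
    rw [pow_add, pow_add]; ring
  have hk : (fun a b : ℕ => ((a + b + d).factorial : ℝ) / (a.factorial * b.factorial))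
      = fun a b => ∫ t in Ioi 0, t ^ a / a.factorial * (t ^ b / b.factorial) *
          (Real.exp (-t) * t ^ d) := by
    ext a b
    simp_rw [hmoment, integral_const_mul, integral_exp_neg_mul_pow]
    ring
  rw [hk]
  refine isPSDKernel_integral_mul_mul ?_ fun a b => ?_
  · filter_upwards [ae_restrict_mem measurableSet_Ioi] with t (ht : 0 < t)
    positivity
  · simp_rw [hmoment]
    exact (integrableOn_exp_neg_mul_pow _).const_mul _

/-- The summand `k_d` of the structure kernel `k_Γ` is positive semidefinite
on `{n ∈ ℕ : n > d}`, for any `C_hv ∈ ℝ` and `C_d ≥ 0`. -/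
theorem kd_is_psd (d : ℕ) (Chv Cd : ℝ) (hCd : 0 ≤ Cd) :
    IsPSDKernel (fun (i j : {n : ℕ // d < n}) =>
      Chv ^ ((i : ℕ) + (j : ℕ) - 2 - 2 * d) * Cd ^ d *
        ((Nat.factorial ((i : ℕ) + (j : ℕ) - 2 - d) : ℝ) /
          ((Nat.factorial ((i : ℕ) - 1 - d) : ℝ) *
            (Nat.factorial ((j : ℕ) - 1 - d) : ℝ)))) := by
  set a : {n : ℕ // d < n} → ℕ := fun i => i - 1 - d
  have hk : ∀ i j : {n : ℕ // d < n},
      Chv ^ ((i : ℕ) + (j : ℕ) - 2 - 2 * d) * Cd ^ d *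
        ((Nat.factorial ((i : ℕ) + (j : ℕ) - 2 - d) : ℝ) /
          ((Nat.factorial ((i : ℕ) - 1 - d) : ℝ) * (Nat.factorial ((j : ℕ) - 1 - d) : ℝ)))
      = Cd ^ d * (Chv ^ a i * Chv ^ a j *
          (((a i + a j + d).factorial : ℝ) / ((a i).factorial * (a j).factorial))) := by
    intro i j
    have e₁ : (i : ℕ) + j - 2 - 2 * d = a i + a j := by grind
    have e₂ : (i : ℕ) + j - 2 - d = a i + a j + d := by grind
    rw [e₁, e₂, pow_add]
    ring
  simp_rw [hk]
  exact (((isPSDKernel_factorial_add_div d).comp_s8 a).mul_apply_mul_apply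
    (fun i => Chv ^ a i)).const_mul (pow_nonneg hCd d)
end

section
/- Let α > 0 and let k_Σ be a positive semidefinite kernel on Σ. Then k_e(s,t) = ∑_{i=1}^{|s|} ∑_{j=1}^{|t|} k_Σ(sᵢ, tⱼ) · exp(−(i−j)²/α) is a positive semidefinite kernel on the set of finite sequences over Σ. -/
private lemma psd_fintype {X : Type*} {k : X → X → ℝ} (h : IsPSDKernel k)
    {I : Type*} [Fintype I] (x : I → X) (c : I → ℝ) :
    0 ≤ ∑ i : I, ∑ j : I, c i * c j * k (x i) (x j) := by
  classical
  let e := Fintype.equivFin I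
  have h1 := h (Fintype.card I) (fun i => x (e.symm i)) (fun i => c (e.symm i))
  refine le_of_le_of_eq h1 ?_
  refine Fintype.sum_equiv e.symm _ _ fun i => ?_
  exact Fintype.sum_equiv e.symm _ _ fun j => rfl

private lemma real_exp_tsum (y : ℝ) : Real.exp y = ∑' m : ℕ, y ^ m / m.factorial := by
  rw [Real.exp_eq_exp_ℝ, NormedSpace.exp_eq_tsum_div]

/-- Corollary 1: the exponential-structure sequence kernel
`k_e(s,t) = ∑ᵢ∑ⱼ k_Σ(sᵢ,tⱼ) exp(−(i−j)²/α)` is PSD. -/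
theorem exponential_sequence_kernel_is_psd {A : Type*} (α : ℝ) (hα : 0 < α)
    (kA : A → A → ℝ) (hA : IsPSDKernel kA) :
    IsPSDKernel (fun (s t : List A) =>
      ∑ i : Fin s.length, ∑ j : Fin t.length,
        kA (s.get i) (t.get j) *
          Real.exp (-(((i : ℕ) : ℝ) - ((j : ℕ) : ℝ)) ^ 2 / α)) := by
  classical
  intro n x c
  set I := (Σ i : Fin n, Fin (x i).length) with hI
  set a : I → A := fun u => (x u.1).get u.2 with ha
  set g : I → ℝ := fun u => ((u.2 : ℕ) : ℝ) with hg
  set d : I → ℝ := fun u => c u.1 with hd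
  -- feature weights
  set w : ℕ → I → ℝ := fun m u => d u * Real.exp (-(g u) ^ 2 / α) * (g u) ^ m with hw
  set F : I → I → ℕ → ℝ := fun u v m =>
    ((2 / α) ^ m / m.factorial) * (w m u * w m v * kA (a u) (a v)) with hF
  have hsumm : ∀ u v : I, Summable (fun m => F u v m) := by
    intro u v
    have h1 : Summable (fun m : ℕ => (2 / α * (g u * g v)) ^ m / m.factorial) :=
      Real.summable_pow_div_factorial _
    have h2 := h1.mul_right
      ((d u * Real.exp (-(g u) ^ 2 / α)) * (d v * Real.exp (-(g v) ^ 2 / α)) * kA (a u) (a v))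
    refine h2.congr fun m => ?_
    simp only [hF, hw]
    ring
  -- each term of the quadratic form equals a tsum
  have hterm : ∀ u v : I,
      d u * d v * (kA (a u) (a v) * Real.exp (-(g u - g v) ^ 2 / α)) = ∑' m, F u v m := by
    intro u v
    have hexp : Real.exp (-(g u - g v) ^ 2 / α) =
        Real.exp (-(g u) ^ 2 / α) * Real.exp (-(g v) ^ 2 / α) *
          Real.exp (2 / α * (g u * g v)) := by
      rw [← Real.exp_add, ← Real.exp_add]
      congr 1
      field_simp
      ring
    have hFeq : (fun m => F u v m) = fun m =>
        (d u * d v * (kA (a u) (a v) *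
          (Real.exp (-(g u) ^ 2 / α) * Real.exp (-(g v) ^ 2 / α)))) *
          ((2 / α * (g u * g v)) ^ m / m.factorial) := by
      funext m
      simp only [hF, hw]
      ring
    rw [hFeq, tsum_mul_left, ← real_exp_tsum, hexp]
    ring
  -- summing over the sigma type = nested sums
  have hsig : ∀ (f : I → ℝ), ∑ u : I, f u =
      ∑ i : Fin n, ∑ p : Fin (x i).length, f ⟨i, p⟩ := by
    intro f
    rw [show (Finset.univ : Finset I) =
        Finset.univ.sigma (fun _ => Finset.univ) from Finset.univ_sigma_univ.symm]
    exact Finset.sum_sigma _ _ _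
  -- the fully expanded quadratic form
  have hQ : ∑ i : Fin n, ∑ j : Fin n, c i * c j *
        (∑ p : Fin (x i).length, ∑ q : Fin (x j).length,
          kA ((x i).get p) ((x j).get q) *
            Real.exp (-(((p : ℕ) : ℝ) - ((q : ℕ) : ℝ)) ^ 2 / α)) =
      ∑ u : I, ∑ v : I, d u * d v * (kA (a u) (a v) * Real.exp (-(g u - g v) ^ 2 / α)) := by
    rw [hsig]
    refine Finset.sum_congr rfl fun i _ => ?_
    simp only [Finset.mul_sum]
    rw [Finset.sum_comm]
    refine Finset.sum_congr rfl fun p _ => ?_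
    rw [hsig (fun v => d ⟨i, p⟩ * d v * (kA (a ⟨i, p⟩) (a v) *
      Real.exp (-(g ⟨i, p⟩ - g v) ^ 2 / α)))]
  show (0:ℝ) ≤ ∑ i : Fin n, ∑ j : Fin n, c i * c j * _
  rw [hQ]
  simp only [hterm]
  have hswap : ∑ u : I, ∑ v : I, ∑' m, F u v m = ∑' m, ∑ u : I, ∑ v : I, F u v m := by
    rw [Summable.tsum_finsetSum (fun u _ => summable_sum (fun v _ => hsumm u v))]
    refine Finset.sum_congr rfl fun u _ => ?_
    rw [Summable.tsum_finsetSum (fun v _ => hsumm u v)]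
  rw [hswap]
  refine tsum_nonneg fun m => ?_
  have key : ∑ u : I, ∑ v : I, F u v m =
      ((2 / α) ^ m / m.factorial) *
        ∑ u : I, ∑ v : I, w m u * w m v * kA (a u) (a v) := by
    rw [Finset.mul_sum]
    refine Finset.sum_congr rfl fun u _ => ?_
    rw [Finset.mul_sum]
  rw [key]
  have h1 : (0:ℝ) ≤ (2 / α) ^ m / m.factorial := by positivity
  exact mul_nonneg h1 (psd_fintype hA a (w m))
end

section
/- Define the path kernel k_p recursively on pairs of finite sequences over Σ by: k_p(s,t) = 0 if s or t is empty, and otherwise k_p(s,t) = k_Σ(s₁,t₁) + C_hv·k_p(s_{2:},t) + C_hv·k_p(s,t_{2:}) + C_d·k_p(s_{2:},t_{2:}), where s_{2:} denotes the tail of s. Then k_p satisfies the closed form k_p(s,t) = ∑_{i=1}^{|s|} ∑_{j=1}^{|t|} k_Σ(sᵢ,tⱼ) · k_Γ(i,j), where k_Γ(i,j) = ∑_{d=0}^{min(i,j)−1} C_hv^{i+j−2−2d} C_d^d (i+j−2−d)!/((i−1−d)!(j−1−d)!d!). -/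
/-- The Path kernel, defined recursively (Eq. 4). -/
noncomputable def pathKernel {A : Type*} (kA : A → A → ℝ) (Chv Cd : ℝ) :
    List A → List A → ℝ
  | [], _ => 0
  | _ :: _, [] => 0
  | a :: s, b :: t =>
      kA a b + Chv * pathKernel kA Chv Cd s (b :: t)
        + Chv * pathKernel kA Chv Cd (a :: s) t
        + Cd * pathKernel kA Chv Cd s t
termination_by x y => x.length + y.length
decreasing_by all_goals (simp [List.length]; try omega)

/-- The structure kernel `k_Γ` (Eq. 5). -/
noncomputable def kGamma (Chv Cd : ℝ) (i j : ℕ) : ℝ :=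
  ∑ d ∈ Finset.range (min i j),
    Chv ^ (i + j - 2 - 2 * d) * Cd ^ d *
      ((Nat.factorial (i + j - 2 - d) : ℝ) /
        ((Nat.factorial (i - 1 - d) : ℝ) * (Nat.factorial (j - 1 - d) : ℝ) *
          (Nat.factorial d : ℝ)))

/-!
`kGamma (i + 1) (j + 1)` is the total weight of the lattice paths from `(0, 0)` to `(i, j)` whose
steps `(1, 0)`, `(0, 1)` have weight `C_hv` and whose diagonal steps `(1, 1)` have weight `C_d`:
there are `(i + j - d)! / ((i - d)! (j - d)! d!)` such paths with `d` diagonal steps. Splitting off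
the last step shows that these weights obey the same recursion as `k_p`, and unrolling that
recursion writes `k_p(s, t)` as the sum of the `k_Σ(sᵢ, tⱼ)` weighted by the paths reaching
`(i, j)`.
-/

open Finset
open scoped Nat

namespace Nat

/-- The number `(a + b - d)! / ((a - d)! (b - d)! d!)` of lattice paths from `(0, 0)` to `(a, b)`
with `d` diagonal steps, written without division so that it vanishes when `min a b < d`. -/
def trinomial (a b d : ℕ) : ℕ := a.choose d * (a + b - d).choose a

lemma trinomial_eq_zero_of_min_lt {a b d : ℕ} (h : min a b < d) : trinomial a b d = 0 := by
  rcases lt_or_ge a d with had | hda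
  · simp [trinomial, choose_eq_zero_of_lt had]
  · simp [trinomial, choose_eq_zero_of_lt (by omega : a + b - d < a)]

lemma trinomial_mul_factorial {a b d : ℕ} (hda : d ≤ a) (hdb : d ≤ b) :
    trinomial a b d * ((a - d)! * (b - d)! * d !) = (a + b - d)! := by
  have ha := choose_mul_factorial_mul_factorial hda
  have hab := choose_mul_factorial_mul_factorial (by omega : a ≤ a + b - d)
  rw [show a + b - d - a = b - d by omega, ← ha] at hab
  rw [trinomial, ← hab]
  ring

lemma trinomial_succ_succ_zero (a b : ℕ) :
    trinomial (a + 1) (b + 1) 0 = trinomial a (b + 1) 0 + trinomial (a + 1) b 0 := by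
  simp only [trinomial, choose_zero_right, Nat.sub_zero, one_mul]
  rw [show a + 1 + (b + 1) = a + b + 1 + 1 by ring, choose_succ_succ',
    show a + (b + 1) = a + b + 1 by ring, add_right_comm a 1 b]

lemma trinomial_succ_succ_succ (a b d : ℕ) :
    trinomial (a + 1) (b + 1) (d + 1) =
      trinomial a (b + 1) (d + 1) + trinomial (a + 1) b (d + 1) + trinomial a b d := by
  rcases le_or_gt d (a + b) with hd | hd
  · simp only [trinomial, show a + 1 + (b + 1) - (d + 1) = a + b - d + 1 by omega,
      show a + (b + 1) - (d + 1) = a + b - d by omega,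
      show a + 1 + b - (d + 1) = a + b - d by omega, choose_succ_succ']
    ring
  · simp [trinomial, choose_eq_zero_of_lt (by omega : a < d),
      choose_eq_zero_of_lt (by omega : a < d + 1), choose_eq_zero_of_lt (by omega : a + 1 < d + 1)]

end Nat

section kGamma

variable (Chv Cd : ℝ)

noncomputable def kGammaTerm (a b d : ℕ) : ℝ :=
  Chv ^ (a + b - 2 * d) * Cd ^ d * a.trinomial b d

lemma kGamma_succ_succ_eq_sum {a b N : ℕ} (hN : min a b < N) :
    kGamma Chv Cd (a + 1) (b + 1) = ∑ d ∈ range N, kGammaTerm Chv Cd a b d := by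
  rw [kGamma, min_add_add_right, ← sum_subset (range_subset_range.2 hN)]
  · refine sum_congr rfl fun d hd => ?_
    have hda : d ≤ a := by simp at hd; omega
    have hdb : d ≤ b := by simp at hd; omega
    rw [show a + 1 + (b + 1) - 2 - 2 * d = a + b - 2 * d by omega,
      show a + 1 + (b + 1) - 2 - d = a + b - d by omega, show a + 1 - 1 - d = a - d by omega,
      show b + 1 - 1 - d = b - d by omega, ← Nat.trinomial_mul_factorial hda hdb]
    push_cast
    rw [mul_div_cancel_right₀ _ (by positivity), kGammaTerm]
  · intro d _ hd
    rw [kGammaTerm, Nat.trinomial_eq_zero_of_min_lt (by simp at hd; omega), Nat.cast_zero,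
      mul_zero]

lemma mul_kGammaTerm (a b d : ℕ) :
    Chv * kGammaTerm Chv Cd a b d = Chv ^ (a + b + 1 - 2 * d) * Cd ^ d * a.trinomial b d := by
  rcases lt_or_ge (min a b) d with h | h
  · simp [kGammaTerm, Nat.trinomial_eq_zero_of_min_lt h]
  · rw [kGammaTerm, show a + b + 1 - 2 * d = a + b - 2 * d + 1 by omega, pow_succ]
    ring

lemma kGammaTerm_succ_succ_zero (a b : ℕ) :
    kGammaTerm Chv Cd (a + 1) (b + 1) 0 =
      Chv * kGammaTerm Chv Cd a (b + 1) 0 + Chv * kGammaTerm Chv Cd (a + 1) b 0 := by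
  rw [mul_kGammaTerm, mul_kGammaTerm, kGammaTerm, Nat.trinomial_succ_succ_zero,
    show a + (b + 1) + 1 - 2 * 0 = a + 1 + (b + 1) - 2 * 0 by omega,
    show a + 1 + b + 1 - 2 * 0 = a + 1 + (b + 1) - 2 * 0 by omega]
  push_cast
  ring

lemma kGammaTerm_succ_succ_succ (a b d : ℕ) :
    kGammaTerm Chv Cd (a + 1) (b + 1) (d + 1) =
      Chv * kGammaTerm Chv Cd a (b + 1) (d + 1) + Chv * kGammaTerm Chv Cd (a + 1) b (d + 1) +
        Cd * kGammaTerm Chv Cd a b d := by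
  rw [mul_kGammaTerm, mul_kGammaTerm]
  simp only [kGammaTerm, Nat.trinomial_succ_succ_succ,
    show a + (b + 1) + 1 - 2 * (d + 1) = a + b - 2 * d by omega,
    show a + 1 + b + 1 - 2 * (d + 1) = a + b - 2 * d by omega,
    show a + 1 + (b + 1) - 2 * (d + 1) = a + b - 2 * d by omega]
  push_cast
  ring

@[simp] lemma kGamma_zero_left (j : ℕ) : kGamma Chv Cd 0 j = 0 := by
  simp [kGamma]

@[simp] lemma kGamma_zero_right (i : ℕ) : kGamma Chv Cd i 0 = 0 := by
  simp [kGamma]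

lemma kGamma_one_succ (b : ℕ) : kGamma Chv Cd 1 (b + 1) = Chv ^ b := by
  simpa [kGammaTerm, Nat.trinomial] using
    kGamma_succ_succ_eq_sum Chv Cd (a := 0) (b := b) (N := 1) (by simp)

lemma kGamma_succ_one (a : ℕ) : kGamma Chv Cd (a + 1) 1 = Chv ^ a := by
  simpa [kGammaTerm, Nat.trinomial] using
    kGamma_succ_succ_eq_sum Chv Cd (a := a) (b := 0) (N := 1) (by simp)

lemma kGamma_succ_succ {i j : ℕ} (hij : i + j ≠ 0) :
    kGamma Chv Cd (i + 1) (j + 1) =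
      Chv * kGamma Chv Cd i (j + 1) + Chv * kGamma Chv Cd (i + 1) j + Cd * kGamma Chv Cd i j := by
  rcases i with _ | a <;> rcases j with _ | b
  · simp at hij
  · simp [kGamma_one_succ, pow_succ, mul_comm]
  · simp [kGamma_succ_one, pow_succ, mul_comm]
  · rw [kGamma_succ_succ_eq_sum Chv Cd (N := a + 2) (by omega),
      kGamma_succ_succ_eq_sum Chv Cd (N := a + 2) (by omega),
      kGamma_succ_succ_eq_sum Chv Cd (N := a + 2) (by omega),
      kGamma_succ_succ_eq_sum Chv Cd (N := a + 1) (by omega)]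
    simp only [sum_range_succ' _ (a + 1), kGammaTerm_succ_succ_succ, kGammaTerm_succ_succ_zero,
      sum_add_distrib, mul_sum, mul_add]
    ring

end kGamma

/-- `K (i + 1) (j + 1)` is the weight of the lattice paths from `(0, 0)` to `(i, j)`; the index `0`
stands for the coordinate `-1`, which no path reaches. -/
structure IsPathWeight (Chv Cd : ℝ) (K : ℕ → ℕ → ℝ) : Prop where
  zero_left : ∀ j, K 0 j = 0
  zero_right : ∀ i, K i 0 = 0
  one_one : K 1 1 = 1
  succ_succ : ∀ {i j}, i + j ≠ 0 →
    K (i + 1) (j + 1) = Chv * K i (j + 1) + Chv * K (i + 1) j + Cd * K i j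

lemma isPathWeight_kGamma (Chv Cd : ℝ) : IsPathWeight Chv Cd (kGamma Chv Cd) where
  zero_left := kGamma_zero_left Chv Cd
  zero_right := kGamma_zero_right Chv Cd
  one_one := by simpa using kGamma_one_succ Chv Cd 0
  succ_succ := kGamma_succ_succ Chv Cd

section kernelSum

variable {A : Type*} (kA : A → A → ℝ)

noncomputable def kernelSum (K : ℕ → ℕ → ℝ) (s t : List A) : ℝ :=
  ∑ i : Fin s.length, ∑ j : Fin t.length, kA (s.get i) (t.get j) * K (i + 1) (j + 1)

lemma IsPathWeight.kernelSum_cons_cons {Chv Cd : ℝ} {K : ℕ → ℕ → ℝ}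
    (hK : IsPathWeight Chv Cd K) (a b : A) (s t : List A) :
    kernelSum kA K (a :: s) (b :: t) =
      kA a b + Chv * kernelSum kA K s (b :: t) + Chv * kernelSum kA K (a :: s) t +
        Cd * kernelSum kA K s t := by
  have hrow (j : ℕ) : K 1 (j + 1 + 1) = Chv * K 1 (j + 1) := by
    simp [hK.succ_succ (i := 0) (j := j + 1) (by omega), hK.zero_left]
  have hcol (i : ℕ) : K (i + 1 + 1) 1 = Chv * K (i + 1) 1 := by
    simp [hK.succ_succ (i := i + 1) (j := 0) (by omega), hK.zero_right]
  have hint (i j : ℕ) : K (i + 1 + 1) (j + 1 + 1) =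
      Chv * K (i + 1) (j + 1 + 1) + Chv * K (i + 1 + 1) (j + 1) + Cd * K (i + 1) (j + 1) :=
    hK.succ_succ (by omega)
  simp only [kernelSum, List.length_cons, Fin.sum_univ_succ, List.get_cons_zero,
    List.get_cons_succ', Fin.val_zero, Fin.val_succ, zero_add, hK.one_one, hrow, hcol, hint]
  simp only [sum_add_distrib, mul_sum, mul_add, mul_left_comm]
  ring

theorem IsPathWeight.pathKernel_eq_kernelSum {Chv Cd : ℝ} {K : ℕ → ℕ → ℝ}
    (hK : IsPathWeight Chv Cd K) (s t : List A) :
    pathKernel kA Chv Cd s t = kernelSum kA K s t := by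
  induction s, t using pathKernel.induct with
  | case1 t => simp [pathKernel, kernelSum]
  | case2 a s => simp [pathKernel, kernelSum]
  | case3 a s b t ih₁ ih₂ ih₃ => rw [pathKernel, ih₁, ih₂, ih₃, hK.kernelSum_cons_cons]

end kernelSum

/-- Equivalence of the recursive Path kernel (Eq. 4) with the decomposed
closed form (Eq. 5). -/
theorem pathKernel_eq_closed_form {A : Type*} (kA : A → A → ℝ) (Chv Cd : ℝ)
    (s t : List A) :
    pathKernel kA Chv Cd s t =
      ∑ i : Fin s.length, ∑ j : Fin t.length,
        kA (s.get i) (t.get j) * kGamma Chv Cd ((i : ℕ) + 1) ((j : ℕ) + 1) :=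
  (isPathWeight_kGamma Chv Cd).pathKernel_eq_kernelSum kA s t
end

section
/- The function k_Γ with parameters C_hv, C_d satisfies the recursion k_Γ(1,1) = 1, k_Γ(i,1) = C_hv^{i−1}, k_Γ(1,j) = C_hv^{j−1}, and k_Γ(i,j) = C_hv·k_Γ(i−1,j) + C_hv·k_Γ(i,j−1) + C_d·k_Γ(i−1,j−1) for i,j ≥ 2, where k_Γ(i,j) = ∑_{d=0}^{min(i,j)−1} C_hv^{i+j−2−2d} C_d^d (i+j−2−d)!/((i−1−d)!(j−1−d)!d!). -/
lemma fact_ratio (m n d : ℕ) (hdm : d ≤ m) (hdn : d ≤ n) :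
    ((m + n - d).factorial : ℝ) /
      (((m - d).factorial : ℝ) * ((n - d).factorial : ℝ) * (d.factorial : ℝ))
    = (m.choose d : ℝ) * ((m + n - d).choose m : ℝ) := by
  have h1 : m.choose d * d.factorial * (m - d).factorial = m.factorial :=
    Nat.choose_mul_factorial_mul_factorial hdm
  have hm : m ≤ m + n - d := by omega
  have h2 : (m + n - d).choose m * m.factorial * (n - d).factorial = (m + n - d).factorial := by
    have := Nat.choose_mul_factorial_mul_factorial hm
    rwa [show m + n - d - m = n - d by omega] at this
  have key : m.choose d * ((m + n - d).choose m) *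
      ((m - d).factorial * (n - d).factorial * d.factorial) = (m + n - d).factorial := by
    calc m.choose d * ((m + n - d).choose m) *
        ((m - d).factorial * (n - d).factorial * d.factorial)
        = (m + n - d).choose m * m.factorial * (n - d).factorial := by rw [← h1]; ring
      _ = (m + n - d).factorial := h2
  have f1 : ((m - d).factorial : ℝ) ≠ 0 := Nat.cast_ne_zero.mpr (Nat.factorial_ne_zero _)
  have f2 : ((n - d).factorial : ℝ) ≠ 0 := Nat.cast_ne_zero.mpr (Nat.factorial_ne_zero _)
  have f3 : ((d.factorial : ℝ)) ≠ 0 := Nat.cast_ne_zero.mpr (Nat.factorial_ne_zero _)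
  rw [div_eq_iff (by positivity)]
  push_cast [← key]
  ring

lemma kGamma_eq (Chv Cd : ℝ) (m n : ℕ) :
    kGamma Chv Cd (m + 1) (n + 1) =
      ∑ d ∈ Finset.range (m + n + 1),
        Chv ^ (m + n - 2 * d) * Cd ^ d *
          ((m.choose d : ℝ) * ((m + n - d).choose m : ℝ)) := by
  unfold kGamma
  rw [show min (m + 1) (n + 1) = min m n + 1 by omega]
  symm
  rw [← Finset.sum_range_add_sum_Ico _ (show min m n + 1 ≤ m + n + 1 by omega)]
  have hIco : ∑ d ∈ Finset.Ico (min m n + 1) (m + n + 1),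
      Chv ^ (m + n - 2 * d) * Cd ^ d * ((m.choose d : ℝ) * ((m + n - d).choose m : ℝ)) = 0 := by
    apply Finset.sum_eq_zero
    intro d hd
    simp only [Finset.mem_Ico] at hd
    rcases le_or_gt d m with hm | hm
    · have hn : n < d := by omega
      have : (m + n - d).choose m = 0 := Nat.choose_eq_zero_of_lt (by omega)
      simp [this]
    · have : m.choose d = 0 := Nat.choose_eq_zero_of_lt hm
      simp [this]
  rw [hIco, add_zero]
  apply Finset.sum_congr rfl
  intro d hd
  simp only [Finset.mem_range] at hd
  have hdm : d ≤ m := by omega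
  have hdn : d ≤ n := by omega
  rw [show m + 1 + (n + 1) - 2 - 2 * d = m + n - 2 * d by omega,
    show m + 1 + (n + 1) - 2 - d = m + n - d by omega,
    show m + 1 - 1 - d = m - d by omega,
    show n + 1 - 1 - d = n - d by omega,
    fact_ratio m n d hdm hdn]

lemma chooseId (a b d : ℕ) :
    (a + 1).choose (d + 1) * ((a + b + 1 - d).choose (a + 1)) =
      a.choose (d + 1) * ((a + b - d).choose a) +
        (a + 1).choose (d + 1) * ((a + b - d).choose (a + 1)) +
        a.choose d * ((a + b - d).choose a) := by
  rcases le_or_gt d (a + b) with h | h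
  · rw [show a + b + 1 - d = (a + b - d) + 1 by omega, Nat.choose_succ_succ (a + b - d) a,
      Nat.choose_succ_succ a d]
    ring
  · have e1 : a + b + 1 - d = 0 ∨ (a + b + 1 - d) < a + 1 := by omega
    have z1 : (a + b + 1 - d).choose (a + 1) = 0 := Nat.choose_eq_zero_of_lt (by omega)
    have z2 : a.choose (d + 1) = 0 := Nat.choose_eq_zero_of_lt (by omega)
    have z3 : (a + 1).choose (d + 1) = 0 := Nat.choose_eq_zero_of_lt (by omega)
    have z4 : a.choose d = 0 := Nat.choose_eq_zero_of_lt (by omega)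
    simp [z1, z2, z3, z4]

lemma termwise (Chv Cd : ℝ) (a b d : ℕ) :
    Chv ^ (a + b + 2 - 2 * (d + 1)) * Cd ^ (d + 1) *
        (((a + 1).choose (d + 1) : ℝ) * (((a + b + 2 - (d + 1)).choose (a + 1)) : ℝ)) =
      Chv * (Chv ^ (a + b + 1 - 2 * (d + 1)) * Cd ^ (d + 1) *
          ((a.choose (d + 1) : ℝ) * (((a + b + 1 - (d + 1)).choose a) : ℝ))) +
      Chv * (Chv ^ (a + b + 1 - 2 * (d + 1)) * Cd ^ (d + 1) *
          (((a + 1).choose (d + 1) : ℝ) * (((a + b + 1 - (d + 1)).choose (a + 1)) : ℝ))) +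
      Cd * (Chv ^ (a + b - 2 * d) * Cd ^ d *
          ((a.choose d : ℝ) * (((a + b - d).choose a) : ℝ))) := by
  have hc := chooseId a b d
  rw [show a + b + 2 - (d + 1) = a + b + 1 - d by omega,
    show a + b + 1 - (d + 1) = a + b - d by omega]
  rcases le_or_gt (2 * d + 1) (a + b) with h | h
  · rw [show a + b + 2 - 2 * (d + 1) = (a + b - (2 * d + 1)) + 1 by omega,
      show a + b + 1 - 2 * (d + 1) = a + b - (2 * d + 1) by omega,
      show a + b - 2 * d = (a + b - (2 * d + 1)) + 1 by omega]
    have hcast : (((a + 1).choose (d + 1) : ℝ) * (((a + b + 1 - d).choose (a + 1)) : ℝ)) =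
        (a.choose (d + 1) : ℝ) * ((a + b - d).choose a : ℝ) +
        ((a + 1).choose (d + 1) : ℝ) * ((a + b - d).choose (a + 1) : ℝ) +
        (a.choose d : ℝ) * ((a + b - d).choose a : ℝ) := by exact_mod_cast congrArg Nat.cast hc
    rw [pow_succ]
    linear_combination (Chv ^ (a + b - (2 * d + 1)) * Chv * Cd ^ (d + 1)) * hcast
  · -- 2*d ≥ a+b : truncated exponents, but the first two products vanish
    have e1 : a + b + 2 - 2 * (d + 1) = 0 := by omega
    have e2 : a + b + 1 - 2 * (d + 1) = 0 := by omega
    have e3 : a + b - 2 * d = 0 := by omega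
    have z1 : a.choose (d + 1) * ((a + b - d).choose a) = 0 := by
      rcases le_or_gt (d + 1) a with h1 | h1
      · have : (a + b - d).choose a = 0 := Nat.choose_eq_zero_of_lt (by omega)
        simp [this]
      · have : a.choose (d + 1) = 0 := Nat.choose_eq_zero_of_lt h1
        simp [this]
    have z2 : (a + 1).choose (d + 1) * ((a + b - d).choose (a + 1)) = 0 := by
      rcases le_or_gt (d + 1) (a + 1) with h1 | h1
      · have : (a + b - d).choose (a + 1) = 0 := Nat.choose_eq_zero_of_lt (by omega)
        simp [this]
      · have : (a + 1).choose (d + 1) = 0 := Nat.choose_eq_zero_of_lt h1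
        simp [this]
    have hX : (a + 1).choose (d + 1) * ((a + b + 1 - d).choose (a + 1)) =
        a.choose d * ((a + b - d).choose a) := by omega
    rw [e1, e2, e3]
    have hXc : (((a + 1).choose (d + 1) : ℝ) * (((a + b + 1 - d).choose (a + 1)) : ℝ)) =
        (a.choose d : ℝ) * ((a + b - d).choose a : ℝ) := by exact_mod_cast congrArg Nat.cast hX
    have z1c : (a.choose (d + 1) : ℝ) * ((a + b - d).choose a : ℝ) = 0 := by
      exact_mod_cast congrArg Nat.cast z1
    have z2c : ((a + 1).choose (d + 1) : ℝ) * ((a + b - d).choose (a + 1) : ℝ) = 0 := by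
      exact_mod_cast congrArg Nat.cast z2
    rw [hXc, z1c, z2c]
    ring

lemma key (Chv Cd : ℝ) (a b : ℕ) :
    kGamma Chv Cd (a + 2) (b + 2) =
      Chv * kGamma Chv Cd (a + 1) (b + 2) + Chv * kGamma Chv Cd (a + 2) (b + 1) +
        Cd * kGamma Chv Cd (a + 1) (b + 1) := by
  have L := kGamma_eq Chv Cd (a + 1) (b + 1)
  have A := kGamma_eq Chv Cd a (b + 1)
  have B := kGamma_eq Chv Cd (a + 1) b
  have C := kGamma_eq Chv Cd a b
  simp only [show a + 1 + 1 = a + 2 from rfl, show b + 1 + 1 = b + 2 from rfl] at L A B C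
  rw [L, A, B, C]
  rw [show a + 1 + (b + 1) + 1 = (a + b + 2) + 1 by omega,
    show a + (b + 1) + 1 = a + b + 2 by omega,
    show a + 1 + b + 1 = a + b + 2 by omega]
  -- rewrite summands to use uniform index expressions
  have hA : ∀ d, Chv ^ (a + (b + 1) - 2 * d) * Cd ^ d *
      ((a.choose d : ℝ) * ((a + (b + 1) - d).choose a : ℝ)) =
      Chv ^ (a + b + 1 - 2 * d) * Cd ^ d *
      ((a.choose d : ℝ) * ((a + b + 1 - d).choose a : ℝ)) := by
    intro d; rw [show a + (b + 1) = a + b + 1 by omega]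
  have hB : ∀ d, Chv ^ (a + 1 + b - 2 * d) * Cd ^ d *
      (((a + 1).choose d : ℝ) * ((a + 1 + b - d).choose (a + 1) : ℝ)) =
      Chv ^ (a + b + 1 - 2 * d) * Cd ^ d *
      (((a + 1).choose d : ℝ) * ((a + b + 1 - d).choose (a + 1) : ℝ)) := by
    intro d; rw [show a + 1 + b = a + b + 1 by omega]
  have hL : ∀ d, Chv ^ (a + 1 + (b + 1) - 2 * d) * Cd ^ d *
      (((a + 1).choose d : ℝ) * ((a + 1 + (b + 1) - d).choose (a + 1) : ℝ)) =
      Chv ^ (a + b + 2 - 2 * d) * Cd ^ d *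
      (((a + 1).choose d : ℝ) * ((a + b + 2 - d).choose (a + 1) : ℝ)) := by
    intro d; rw [show a + 1 + (b + 1) = a + b + 2 by omega]
  simp only [hA, hB, hL]
  -- extend the three RHS sums to range (a+b+3) resp. (a+b+2)
  set N := a + b + 2 with hN
  have extA : ∑ d ∈ Finset.range N, Chv ^ (a + b + 1 - 2 * d) * Cd ^ d *
      ((a.choose d : ℝ) * ((a + b + 1 - d).choose a : ℝ)) =
      ∑ d ∈ Finset.range (N + 1), Chv ^ (a + b + 1 - 2 * d) * Cd ^ d *
      ((a.choose d : ℝ) * ((a + b + 1 - d).choose a : ℝ)) := by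
    symm
    rw [Finset.sum_range_succ]
    have : a.choose N = 0 := Nat.choose_eq_zero_of_lt (by omega)
    simp [this]
  have extB : ∑ d ∈ Finset.range N, Chv ^ (a + b + 1 - 2 * d) * Cd ^ d *
      (((a + 1).choose d : ℝ) * ((a + b + 1 - d).choose (a + 1) : ℝ)) =
      ∑ d ∈ Finset.range (N + 1), Chv ^ (a + b + 1 - 2 * d) * Cd ^ d *
      (((a + 1).choose d : ℝ) * ((a + b + 1 - d).choose (a + 1) : ℝ)) := by
    symm
    rw [Finset.sum_range_succ]
    have : (a + 1).choose N = 0 := Nat.choose_eq_zero_of_lt (by omega)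
    simp [this]
  have extC : ∑ d ∈ Finset.range (a + b + 1), Chv ^ (a + b - 2 * d) * Cd ^ d *
      ((a.choose d : ℝ) * ((a + b - d).choose a : ℝ)) =
      ∑ d ∈ Finset.range N, Chv ^ (a + b - 2 * d) * Cd ^ d *
      ((a.choose d : ℝ) * ((a + b - d).choose a : ℝ)) := by
    symm
    rw [show (Finset.range N) = Finset.range ((a + b + 1) + 1) from by rw [hN],
      Finset.sum_range_succ]
    have : a.choose (a + b + 1) = 0 := Nat.choose_eq_zero_of_lt (by omega)
    simp [this]
  rw [extA, extB, extC]
  rw [Finset.sum_range_succ' (fun d => Chv ^ (a + b + 2 - 2 * d) * Cd ^ d *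
      (((a + 1).choose d : ℝ) * ((a + b + 2 - d).choose (a + 1) : ℝ))) N,
    Finset.sum_range_succ' (fun d => Chv ^ (a + b + 1 - 2 * d) * Cd ^ d *
      ((a.choose d : ℝ) * ((a + b + 1 - d).choose a : ℝ))) N,
    Finset.sum_range_succ' (fun d => Chv ^ (a + b + 1 - 2 * d) * Cd ^ d *
      (((a + 1).choose d : ℝ) * ((a + b + 1 - d).choose (a + 1) : ℝ))) N]
  have boundary : Chv ^ (a + b + 2 - 2 * 0) * Cd ^ 0 *
      (((a + 1).choose 0 : ℝ) * ((a + b + 2 - 0).choose (a + 1) : ℝ)) =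
      Chv * (Chv ^ (a + b + 1 - 2 * 0) * Cd ^ 0 *
        ((a.choose 0 : ℝ) * ((a + b + 1 - 0).choose a : ℝ))) +
      Chv * (Chv ^ (a + b + 1 - 2 * 0) * Cd ^ 0 *
        (((a + 1).choose 0 : ℝ) * ((a + b + 1 - 0).choose (a + 1) : ℝ))) := by
    simp only [Nat.choose_zero_right, Nat.sub_zero, Nat.mul_zero, pow_zero]
    have hp : (a + b + 2).choose (a + 1) = (a + b + 1).choose a + (a + b + 1).choose (a + 1) :=
      Nat.choose_succ_succ (a + b + 1) a
    rw [show a + b + 2 = (a + b + 1) + 1 from rfl, pow_succ]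
    push_cast [hp]
    ring
  have main : ∑ d ∈ Finset.range N, Chv ^ (a + b + 2 - 2 * (d + 1)) * Cd ^ (d + 1) *
      (((a + 1).choose (d + 1) : ℝ) * ((a + b + 2 - (d + 1)).choose (a + 1) : ℝ)) =
      (∑ d ∈ Finset.range N, Chv * (Chv ^ (a + b + 1 - 2 * (d + 1)) * Cd ^ (d + 1) *
        ((a.choose (d + 1) : ℝ) * ((a + b + 1 - (d + 1)).choose a : ℝ)))) +
      (∑ d ∈ Finset.range N, Chv * (Chv ^ (a + b + 1 - 2 * (d + 1)) * Cd ^ (d + 1) *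
        (((a + 1).choose (d + 1) : ℝ) * ((a + b + 1 - (d + 1)).choose (a + 1) : ℝ)))) +
      (∑ d ∈ Finset.range N, Cd * (Chv ^ (a + b - 2 * d) * Cd ^ d *
        ((a.choose d : ℝ) * ((a + b - d).choose a : ℝ)))) := by
    rw [← Finset.sum_add_distrib, ← Finset.sum_add_distrib]
    exact Finset.sum_congr rfl fun d _ => termwise Chv Cd a b d
  rw [main, boundary]
  simp only [mul_add, Finset.mul_sum]
  ring

/-- The Delannoy-like recursion satisfied by `k_Γ`. -/
theorem kGamma_recursion (Chv Cd : ℝ) :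
    kGamma Chv Cd 1 1 = 1 ∧
    (∀ i : ℕ, 1 ≤ i → kGamma Chv Cd i 1 = Chv ^ (i - 1)) ∧
    (∀ j : ℕ, 1 ≤ j → kGamma Chv Cd 1 j = Chv ^ (j - 1)) ∧
    (∀ i j : ℕ, 2 ≤ i → 2 ≤ j →
      kGamma Chv Cd i j =
        Chv * kGamma Chv Cd (i - 1) j + Chv * kGamma Chv Cd i (j - 1) +
          Cd * kGamma Chv Cd (i - 1) (j - 1)) := by
  have base : ∀ i : ℕ, 1 ≤ i → kGamma Chv Cd i 1 = Chv ^ (i - 1) := by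
    intro i hi
    obtain ⟨k, rfl⟩ : ∃ k, i = k + 1 := ⟨i - 1, by omega⟩
    unfold kGamma
    rw [show min (k + 1) 1 = 1 by omega, Finset.sum_range_one]
    have hf : ((k.factorial : ℝ)) ≠ 0 := Nat.cast_ne_zero.mpr (Nat.factorial_ne_zero _)
    simp only [show k + 1 + 1 - 2 - 2 * 0 = k from by omega,
      show k + 1 + 1 - 2 - 0 = k from by omega,
      show k + 1 - 1 - 0 = k from by omega, show (1 : ℕ) - 1 - 0 = 0 from by omega,
      show k + 1 - 1 = k from by omega]
    simp [Nat.factorial, div_self hf]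
  have symm0 : ∀ i j : ℕ, kGamma Chv Cd i j = kGamma Chv Cd j i := by
    intro i j
    unfold kGamma
    rw [min_comm]
    apply Finset.sum_congr rfl
    intro d _
    rw [show i + j = j + i by omega]
    ring
  refine ⟨?_, base, ?_, ?_⟩
  · have := base 1 le_rfl
    simpa using this
  · intro j hj
    rw [symm0]
    exact base j hj
  · intro i j hi hj
    obtain ⟨a, rfl⟩ : ∃ a, i = a + 2 := ⟨i - 2, by omega⟩
    obtain ⟨b, rfl⟩ : ∃ b, j = b + 2 := ⟨j - 2, by omega⟩
    rw [show a + 2 - 1 = a + 1 from rfl, show b + 2 - 1 = b + 1 from rfl]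
    exact key Chv Cd a b
end
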